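/- arXiv:1508.00956 — 2 statements merged into one kernel-verified Lean document; each statement's English description precedes it below -/
import Mathlib

section
/- Stability of distances under enlarging the network: if σ and τ are words with |σ|, |τ| ≤ k and k ≤ t, then d_t(σ,τ) = d_k(σ,τ). In particular, for σ ≠ ∅ the quantity d_t(σ,∅) − 1 does not depend on t as long as t ≥ |σ|. -/
open Filter Finset

/-- A letter of the alphabet `{1,2,3}`. -/
abbrev Letter := Fin 3

/-- A word: a finite (possibly empty) sequence of letters. -/
abbrev Word := List Letter

/-- Adjacency of two words: `σ ≠ τ`, and writing `σ = β ++ σ'`, `τ = β ++ τ'` with `β`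
the longest common prefix, either one of `σ'`, `τ'` is empty and the other uses at most two
distinct letters, or `σ' = i j^k` and `τ' = j i^{k'}` for distinct letters `i ≠ j`. -/
def WordAdj (σ τ : Word) : Prop :=
  σ ≠ τ ∧ ∃ β σ' τ' : Word,
    σ = β ++ σ' ∧ τ = β ++ τ' ∧
    ((σ' = [] ∧ τ'.toFinset.card ≤ 2) ∨
     (τ' = [] ∧ σ'.toFinset.card ≤ 2) ∨
     (∃ (i j : Letter) (k k' : ℕ), i ≠ j ∧
        σ' = i :: List.replicate k j ∧ τ' = j :: List.replicate k' i))

/-- The graph `G_t`: vertices are the words of length at most `t` (all other words are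
isolated), with adjacency `WordAdj`. -/
def Gt (t : ℕ) : SimpleGraph Word where
  Adj σ τ := σ.length ≤ t ∧ τ.length ≤ t ∧ WordAdj σ τ
  symm := by
    constructor
    rintro σ τ ⟨h1, h2, hne, β, σ', τ', e1, e2, h3⟩
    refine ⟨h2, h1, hne.symm, β, τ', σ', e2, e1, ?_⟩
    rcases h3 with h | h | ⟨i, j, k, k', hij, hs, ht⟩
    · exact Or.inr (Or.inl h)
    · exact Or.inl h
    · exact Or.inr (Or.inr ⟨j, i, k', k, hij.symm, ht, hs⟩)
  loopless := ⟨fun σ h => h.2.2.1 rfl⟩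

/-- `dW t σ τ` is the geodesic distance `d_t(σ,τ)` in the graph `G_t`. -/
noncomputable def dW (t : ℕ) (σ τ : Word) : ℕ := (Gt t).dist σ τ

/-- Length of the longest suffix of `σ` using at most two distinct letters. -/
def suffLen (σ : Word) : ℕ :=
  Nat.findGreatest (fun m => (σ.drop (σ.length - m)).toFinset.card ≤ 2) σ.length

/-- `fW σ = τ₂` where `σ = τ₂τ₁` and `τ₁` is the longest suffix of `σ` using at most two
distinct letters; `fW [] = []`. -/
def fW (σ : Word) : Word := σ.take (σ.length - suffLen σ)

/-- `ω(σ)`: the least `n ≥ 0` with `f^[n] σ = ∅`. -/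
noncomputable def omegaW (σ : Word) : ℕ := sInf {n : ℕ | fW^[n] σ = []}

/-- `L(σ) = d_{|σ|}(σ, ∅) - 1` for nonempty `σ`, and `L(∅) = 0`. -/
noncomputable def Lw (σ : Word) : ℕ := if σ = [] then 0 else dW σ.length σ [] - 1

/-- `ᾱ_m`: the average of `L` over the `3^m` words of length `m`. -/
noncomputable def alphaBar (m : ℕ) : ℝ :=
  (∑ v : Fin m → Letter, (Lw (List.ofFn v) : ℝ)) / 3 ^ m

/-- `α* = sup_{m ≥ 1} ᾱ_m / m`. -/
noncomputable def alphaStar : ℝ :=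
  sSup {x : ℝ | ∃ m : ℕ, 1 ≤ m ∧ x = alphaBar m / m}

/-- `#V_t = (3^{t+1} - 1)/2`, the number of vertices of `G_t`, as a real number. -/
noncomputable def Nv (t : ℕ) : ℝ := ((3 : ℝ) ^ (t + 1) - 1) / 2

/-- The sum of `d_t(σ,τ)` over all ordered pairs of words `σ, τ ∈ V_t`
(twice the sum over unordered pairs of distinct words). -/
noncomputable def pairSum (t : ℕ) : ℝ :=
  ∑ k ∈ range (t + 1), ∑ l ∈ range (t + 1),
    ∑ v : Fin k → Letter, ∑ w : Fin l → Letter,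
      (dW t (List.ofFn v) (List.ofFn w) : ℝ)

/-- The average path length `D̄(t)` of `G_t`. -/
noncomputable def Dbar (t : ℕ) : ℝ := pairSum t / (Nv t * (Nv t - 1))

/-- `κ_t = (Σ_{σ ∈ V_t} L(σ)) / #V_t`. -/
noncomputable def kappa (t : ℕ) : ℝ :=
  (∑ k ∈ range (t + 1), ∑ v : Fin k → Letter, (Lw (List.ofFn v) : ℝ)) / Nv t

/-- `π_t`: the sum of `d_t(σ,τ)` over unordered pairs of distinct `σ, τ ∈ V_t`. -/
noncomputable def piT (t : ℕ) : ℝ := pairSum t / 2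

/-- `μ_t`: the sum of `d_t(σ,τ)` over unordered pairs of distinct `σ, τ ∈ V_t`
having the same first letter. -/
noncomputable def muT (t : ℕ) : ℝ :=
  (∑ i : Letter, ∑ k ∈ range t, ∑ l ∈ range t,
    ∑ v : Fin k → Letter, ∑ w : Fin l → Letter,
      (dW t (i :: List.ofFn v) (i :: List.ofFn w) : ℝ)) / 2

/-- `λ_t = Σ_{σ ∈ V_t, σ ≠ ∅} d_t(σ, ∅)`. -/
noncomputable def lambdaT (t : ℕ) : ℝ :=
  ∑ k ∈ Finset.Icc 1 t, ∑ v : Fin k → Letter, (dW t (List.ofFn v) [] : ℝ)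

/-- `ν_t = Σ_{i<j} Σ_{|σ'|,|τ'| ≤ t-1} d_t(iσ', jτ')`. -/
noncomputable def nuT (t : ℕ) : ℝ :=
  ∑ i : Letter, ∑ j : Letter,
    if i < j then
      ∑ k ∈ range t, ∑ l ∈ range t,
        ∑ v : Fin k → Letter, ∑ w : Fin l → Letter,
          (dW t (i :: List.ofFn v) (j :: List.ofFn w) : ℝ)
    else 0

/-- `IsNormalDecomp σ τs`: `τs = [τ₁, …, τ_l]` (with `l ≥ 1`) is a normal decomposition
of `σ`: `σ = τ₁⋯τ_l`; `#τ₁ ≤ 2`, `|τ₁| ≥ 1`; `#τ_i = 2`, `|τ_i| ≥ 2` for `i ≥ 2`; and for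
`i < l` the last letter of `τ_i` is the unique letter of the alphabet not appearing
in `τ_{i+1}`. -/
def IsNormalDecomp (σ : Word) (τs : List Word) : Prop :=
  σ = τs.flatten ∧ τs ≠ [] ∧
  (∀ i : Fin τs.length,
    (i.1 = 0 → 1 ≤ (τs.get i).length ∧ (τs.get i).toFinset.card ≤ 2) ∧
    (1 ≤ i.1 → 2 ≤ (τs.get i).length ∧ (τs.get i).toFinset.card = 2)) ∧
  (∀ i : ℕ, ∀ h : i + 1 < τs.length,
    ∃ c : Letter, (τs.get ⟨i, Nat.lt_of_succ_lt h⟩).getLast? = some c ∧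
      c ∉ (τs.get ⟨i + 1, h⟩).toFinset ∧
      ∀ c' : Letter, c' ∉ (τs.get ⟨i + 1, h⟩).toFinset → c' = c)

/-- `W_{k₁⋯k_l}`: the number of words of length `k₁ + ⋯ + k_l` admitting a normal
decomposition into blocks of lengths `k₁, …, k_l`. -/
noncomputable def Wcount (ks : List ℕ) : ℕ :=
  Nat.card {σ : Word // ∃ τs : List Word, IsNormalDecomp σ τs ∧ τs.map List.length = ks}

/-- `Ē(t) = 3^{-t} Σ_{q ≥ 1} Σ_{k₁ ≥ 1, k₂,…,k_q ≥ 2, k₁+⋯+k_q = t} (q-1)·W_{k₁⋯k_q}`. -/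
noncomputable def Ebar (t : ℕ) : ℝ :=
  ((∑ c : Composition t,
      if ∀ i ∈ c.blocks.tail, 2 ≤ i then
        (c.blocks.length - 1) * Wcount c.blocks
      else 0 : ℕ) : ℝ) / 3 ^ t

/-!
Both directions of `d_t(σ,τ) = d_k(σ,τ)` come from comparing walks. Since `G_k ⊆ G_t`, every
walk of `G_k` is one of `G_t`, so `d_t ≤ d_k`. Conversely, truncating every word to its first
`k` letters maps adjacent words of `G_t` to equal or adjacent words of `G_k`, so it turns a
walk of `G_t` into a walk of `G_k` that is no longer; words of length at most `k` are fixed by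
the truncation, hence `d_k ≤ d_t`. Both distances are genuine (not the junk value `0` of
unreachable pairs) because every word of `V_k` is joined to `∅` in `G_k` by deleting its
letters one at a time.
-/

namespace SimpleGraph

variable {V W : Type*} {G : SimpleGraph V} {H : SimpleGraph W} {f : V → W}

theorem Walk.exists_walk_length_le_of_adj_imp_eq_or_adj
    (hf : ∀ ⦃a b⦄, G.Adj a b → f a = f b ∨ H.Adj (f a) (f b)) {u v : V} (p : G.Walk u v) :
    ∃ q : H.Walk (f u) (f v), q.length ≤ p.length := by
  induction p with
  | nil => exact ⟨.nil, le_rfl⟩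
  | cons hadj _ ih =>
    obtain ⟨q, hq⟩ := ih
    rcases hf hadj with heq | hadj'
    · exact ⟨q.copy heq.symm rfl, by simpa using hq.trans (Nat.le_succ _)⟩
    · exact ⟨.cons hadj' q, by simpa using hq⟩

theorem Reachable.dist_le_of_adj_imp_eq_or_adj
    (hf : ∀ ⦃a b⦄, G.Adj a b → f a = f b ∨ H.Adj (f a) (f b)) {u v : V}
    (hr : G.Reachable u v) :
    H.dist (f u) (f v) ≤ G.dist u v := by
  obtain ⟨p, hp⟩ := hr.exists_walk_length_eq_dist
  obtain ⟨q, hq⟩ := p.exists_walk_length_le_of_adj_imp_eq_or_adj hf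
  exact (dist_le q).trans (hp ▸ hq)

end SimpleGraph

theorem WordAdj.take {σ τ : Word} (h : WordAdj σ τ) (k : ℕ) :
    σ.take k = τ.take k ∨ WordAdj (σ.take k) (τ.take k) := by
  obtain ⟨-, β, σ', τ', rfl, rfl, hsuffix⟩ := h
  refine or_iff_not_imp_left.2 fun hne => ⟨hne, β.take k, σ'.take (k - β.length),
    τ'.take (k - β.length), List.take_append, List.take_append, ?_⟩
  have card_take_le (w : Word) (m : ℕ) : (w.take m).toFinset.card ≤ w.toFinset.card :=
    card_le_card fun _ ha => List.mem_toFinset.2 (List.take_subset _ _ (List.mem_toFinset.1 ha))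
  rcases hsuffix with ⟨rfl, hτ'⟩ | ⟨rfl, hσ'⟩ | ⟨i, j, a, b, hij, rfl, rfl⟩
  · exact Or.inl ⟨List.take_nil, (card_take_le _ _).trans hτ'⟩
  · exact Or.inr (Or.inl ⟨List.take_nil, (card_take_le _ _).trans hσ'⟩)
  · cases k - β.length with
    | zero => exact Or.inl ⟨rfl, by simp⟩
    | succ m =>
      exact Or.inr (Or.inr ⟨i, j, min m a, min m b, hij, by simp [List.take_replicate],
        by simp [List.take_replicate]⟩)

theorem Gt_monotone : Monotone Gt :=
  fun _ _ hkt _ _ ⟨hσ, hτ, hadj⟩ => ⟨hσ.trans hkt, hτ.trans hkt, hadj⟩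

theorem Gt_adj_take {t : ℕ} {σ τ : Word} (h : (Gt t).Adj σ τ) (k : ℕ) :
    σ.take k = τ.take k ∨ (Gt k).Adj (σ.take k) (τ.take k) :=
  h.2.2.take k |>.imp_right fun hadj => ⟨List.length_take_le _ _, List.length_take_le _ _, hadj⟩

theorem Gt_adj_append_singleton {t : ℕ} {β : Word} (c : Letter) (h : (β ++ [c]).length ≤ t) :
    (Gt t).Adj (β ++ [c]) β := by
  refine ⟨h, (List.prefix_append _ _).length_le.trans h, by simp, β, [c], [], rfl,
    (List.append_nil β).symm, Or.inr (Or.inl ⟨rfl, by simp⟩)⟩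

theorem Gt_reachable_nil {t : ℕ} {σ : Word} (h : σ.length ≤ t) : (Gt t).Reachable σ [] := by
  induction σ using List.reverseRecOn with
  | nil => rfl
  | append_singleton β c ih =>
    exact (Gt_adj_append_singleton c h).reachable.trans
      (ih ((List.prefix_append _ _).length_le.trans h))

theorem dW_eq_of_le {k t : ℕ} (hkt : k ≤ t) {σ τ : Word} (hσ : σ.length ≤ k)
    (hτ : τ.length ≤ k) : dW t σ τ = dW k σ τ := by
  have hreach : (Gt k).Reachable σ τ := (Gt_reachable_nil hσ).trans (Gt_reachable_nil hτ).symm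
  refine le_antisymm (hreach.dist_anti (Gt_monotone hkt)) ?_
  have htrunc := (hreach.mono (Gt_monotone hkt)).dist_le_of_adj_imp_eq_or_adj
    (f := List.take k) fun _ _ hadj => Gt_adj_take hadj k
  rwa [List.take_of_length_le hσ, List.take_of_length_le hτ] at htrunc

/-- Stability of distances under enlarging the network: if `|σ|, |τ| ≤ k ≤ t`, then
`d_t(σ,τ) = d_k(σ,τ)`; in particular, for `σ ≠ ∅`, the quantity `d_t(σ,∅) − 1` does not
depend on `t ≥ |σ|` (it equals `L(σ)`). -/
theorem dist_stable_under_enlarging :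
    (∀ k t : ℕ, k ≤ t → ∀ σ τ : Word, σ.length ≤ k → τ.length ≤ k →
      dW t σ τ = dW k σ τ) ∧
    (∀ σ : Word, σ ≠ [] → ∀ t : ℕ, σ.length ≤ t → dW t σ [] - 1 = Lw σ) := by
  refine ⟨fun k t hkt σ τ hσ hτ => dW_eq_of_le hkt hσ hτ, fun σ hσ t ht => ?_⟩
  rw [Lw, if_neg hσ, dW_eq_of_le ht le_rfl (Nat.zero_le _)]
end

section
/- If words σ and τ are adjacent (σ ~ τ), then ω(σ) ≥ ω(τ) − 1. -/
open Filter Finset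

/-!
In every case of the adjacency, `τ = βτ'` where `β` is a prefix of `σ` and `τ'` uses at most
two letters. The map `f` is monotone for the prefix order: if `β` is a prefix of `σ`, the part
of `β` lying in the two-letter suffix that `f` removes from `σ` is itself a two-letter suffix of
`β`, so `f` removes at least that much from `β`. Hence `ω` is monotone for the prefix order, and
since `f(βτ')` is a prefix of `β`, `ω(βτ') ≤ ω(β) + 1 ≤ ω(σ) + 1`.
-/

lemma List.card_toFinset_le_of_subset {α : Type*} [DecidableEq α] {l₁ l₂ : List α}
    (h : l₁ ⊆ l₂) : l₁.toFinset.card ≤ l₂.toFinset.card :=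
  Finset.card_le_card fun _ hx => List.mem_toFinset.2 (h (List.mem_toFinset.1 hx))

lemma card_toFinset_drop_suffLen_le (σ : Word) :
    (σ.drop (σ.length - suffLen σ)).toFinset.card ≤ 2 :=
  Nat.findGreatest_spec (P := fun m => (σ.drop (σ.length - m)).toFinset.card ≤ 2)
    (Nat.zero_le _) (by simp)

lemma length_fW_le {σ : Word} {m : ℕ} (h : (σ.drop m).toFinset.card ≤ 2) :
    (fW σ).length ≤ m := by
  rcases le_or_gt σ.length m with hm | hm
  · exact (List.length_take_le' _ _).trans hm
  · have : σ.length - m ≤ suffLen σ :=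
      Nat.le_findGreatest (Nat.sub_le _ _) (by rwa [Nat.sub_sub_self hm.le])
    simp only [fW, List.length_take]
    omega

lemma fW_prefix (σ : Word) : fW σ <+: σ := List.take_prefix _ _

lemma fW_prefix_take {σ : Word} {m : ℕ} (h : (σ.drop m).toFinset.card ≤ 2) :
    fW σ <+: σ.take m :=
  List.prefix_of_prefix_length_le (fW_prefix σ) (List.take_prefix _ _) <| by
    rw [List.length_take]
    exact le_min (length_fW_le h) (fW_prefix σ).length_le

lemma fW_mono {β σ : Word} (h : β <+: σ) : fW β <+: fW σ := by
  have hfβ : fW β <+: β.take (σ.length - suffLen σ) := fW_prefix_take <|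
    (List.card_toFinset_le_of_subset (h.drop _).subset).trans
      (card_toFinset_drop_suffLen_le σ)
  exact hfβ.trans (h.take _)

lemma fW_append_prefix {β τ : Word} (h : τ.toFinset.card ≤ 2) : fW (β ++ τ) <+: β := by
  simpa using fW_prefix_take (σ := β ++ τ) (m := β.length) (by simpa using h)

lemma length_fW_lt {σ : Word} (h : σ ≠ []) : (fW σ).length < σ.length := by
  have hpos : 0 < σ.length := List.length_pos_iff.2 h
  have := length_fW_le (σ := σ) (m := σ.length - 1) <| by
    refine (List.toFinset_card_le _).trans ?_
    simp only [List.length_drop]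
    omega
  omega

lemma exists_iterate_fW_eq_nil (σ : Word) : ∃ n, fW^[n] σ = [] := by
  induction hN : σ.length using Nat.strong_induction_on generalizing σ with
  | _ N ih =>
    rcases eq_or_ne σ [] with rfl | hσ
    · exact ⟨0, rfl⟩
    · obtain ⟨n, hn⟩ := ih _ (hN ▸ length_fW_lt hσ) (fW σ) rfl
      exact ⟨n + 1, hn⟩

lemma iterate_fW_omegaW (σ : Word) : fW^[omegaW σ] σ = [] :=
  Nat.sInf_mem (exists_iterate_fW_eq_nil σ)

lemma omegaW_nil : omegaW [] = 0 := Nat.sInf_eq_zero.2 (Or.inl rfl)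

lemma omegaW_eq_succ {σ : Word} (h : σ ≠ []) : omegaW σ = omegaW (fW σ) + 1 := by
  have hspec := iterate_fW_omegaW σ
  obtain ⟨n, hn⟩ : ∃ n, omegaW σ = n + 1 :=
    Nat.exists_eq_succ_of_ne_zero fun h0 => h (by rwa [h0] at hspec)
  rw [hn, Function.iterate_succ_apply] at hspec
  have h₁ : omegaW (fW σ) ≤ n := Nat.sInf_le hspec
  have h₂ : omegaW σ ≤ omegaW (fW σ) + 1 := Nat.sInf_le (iterate_fW_omegaW (fW σ))
  omega

lemma omegaW_mono {β σ : Word} (h : β <+: σ) : omegaW β ≤ omegaW σ := by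
  induction hN : σ.length using Nat.strong_induction_on generalizing β σ with
  | _ N ih =>
    rcases eq_or_ne β [] with rfl | hβ
    · simp [omegaW_nil]
    · have hσ : σ ≠ [] := by rintro rfl; exact hβ (List.prefix_nil.1 h)
      rw [omegaW_eq_succ hβ, omegaW_eq_succ hσ]
      exact Nat.succ_le_succ (ih _ (hN ▸ length_fW_lt hσ) (fW_mono h) rfl)

lemma omegaW_append_le {β τ : Word} (h : τ.toFinset.card ≤ 2) :
    omegaW (β ++ τ) ≤ omegaW β + 1 := by
  rcases eq_or_ne (β ++ τ) [] with hnil | hne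
  · simp [hnil, omegaW_nil]
  · rw [omegaW_eq_succ hne]
    exact Nat.succ_le_succ (omegaW_mono (fW_append_prefix h))

lemma WordAdj.exists_prefix_append {σ τ : Word} (h : WordAdj σ τ) :
    ∃ β τ' : Word, β <+: σ ∧ τ = β ++ τ' ∧ τ'.toFinset.card ≤ 2 := by
  obtain ⟨-, β, σ', τ', rfl, rfl, hcases⟩ := h
  refine ⟨β, τ', List.prefix_append _ _, rfl, ?_⟩
  rcases hcases with ⟨-, hτ'⟩ | ⟨rfl, -⟩ | ⟨i, j, -, k', -, -, rfl⟩
  · exact hτ'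
  · simp
  · calc (j :: List.replicate k' i).toFinset.card ≤ ({j, i} : Finset Letter).card :=
          Finset.card_le_card fun x hx => by
            simp only [List.mem_toFinset, List.mem_cons, List.mem_replicate] at hx
            simp only [Finset.mem_insert, Finset.mem_singleton]
            tauto
      _ ≤ 2 := Finset.card_le_two

/-- If words `σ` and `τ` are adjacent (`σ ~ τ`), then `ω(σ) ≥ ω(τ) − 1`. -/
theorem omega_ge_of_adj (σ τ : Word) (h : WordAdj σ τ) :
    (omegaW τ : ℤ) - 1 ≤ (omegaW σ : ℤ) := by
  obtain ⟨β, τ', hβ, rfl, hτ'⟩ := h.exists_prefix_append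
  have := (omegaW_append_le hτ').trans (Nat.add_le_add_right (omegaW_mono hβ) 1)
  omega
end
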